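/- arXiv:2112.15134 — 4 statements merged into one kernel-verified Lean document; each statement's English description precedes it below -/
import Mathlib

section
/- Let P ⊂ ℝ² be a plane convex body such that w_{(1,0)}(P) = w_{(0,1)}(P) = h. Then the lattice width of P satisfies w(P) = min{ h, w_{(1,1)}(P), w_{(1,-1)}(P) }. -/
open Set MeasureTheory Pointwise

/-- A plane convex body: a compact convex subset of ℝ² with nonempty interior. -/
def IsPlaneConvexBody (P : Set (Fin 2 → ℝ)) : Prop :=
  IsCompact P ∧ Convex ℝ P ∧ (interior P).Nonempty

/-- The width of `P` in the direction `u`. -/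
noncomputable def width (P : Set (Fin 2 → ℝ)) (u : Fin 2 → ℝ) : ℝ :=
  sSup ((fun p => u 0 * p 0 + u 1 * p 1) '' P) -
    sInf ((fun p => u 0 * p 0 + u 1 * p 1) '' P)

/-- An affine unimodular transformation: multiplication by an integer matrix with
determinant `±1` followed by a translation by an integer vector. -/
def IsUnimodularMap (φ : (Fin 2 → ℝ) → (Fin 2 → ℝ)) : Prop :=
  ∃ (A : Matrix (Fin 2) (Fin 2) ℤ) (t : Fin 2 → ℤ),
    (A.det = 1 ∨ A.det = -1) ∧
    ∀ x, φ x = (A.map (Int.cast : ℤ → ℝ)).mulVec x + fun i => (t i : ℝ)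

/-- Two subsets of ℝ² are lattice-equivalent if one is the image of the other
under an affine unimodular transformation. -/
def LatticeEquivalent (P Q : Set (Fin 2 → ℝ)) : Prop :=
  ∃ φ, IsUnimodularMap φ ∧ Q = φ '' P

/-- The `l`-dilate of the unit square, `[0,l]²`. -/
def squareDilate (l : ℝ) : Set (Fin 2 → ℝ) :=
  {x | ∀ i, x i ∈ Set.Icc 0 l}

/-- The `l`-dilate of the standard 2-simplex. -/
def simplexDilate (l : ℝ) : Set (Fin 2 → ℝ) :=
  {x | 0 ≤ x 0 ∧ 0 ≤ x 1 ∧ x 0 + x 1 ≤ l}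

/-- The lattice size of `P` with respect to the unit square. -/
noncomputable def lsSquare (P : Set (Fin 2 → ℝ)) : ℝ :=
  sInf {l : ℝ | 0 ≤ l ∧ ∃ φ, IsUnimodularMap φ ∧ φ '' P ⊆ squareDilate l}

/-- The lattice size of `P` with respect to the standard simplex. -/
noncomputable def lsDelta (P : Set (Fin 2 → ℝ)) : ℝ :=
  sInf {l : ℝ | 0 ≤ l ∧ ∃ φ, IsUnimodularMap φ ∧ φ '' P ⊆ simplexDilate l}

/-- The lattice width of `P`: the minimum of `width P u` over primitive integer
directions `u`. -/
noncomputable def latticeWidth (P : Set (Fin 2 → ℝ)) : ℝ :=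
  sInf {w : ℝ | ∃ u : Fin 2 → ℤ, Int.gcd (u 0) (u 1) = 1 ∧
    w = width P (fun i => (u i : ℝ))}

/-- A lattice polygon: the convex hull of a (nonempty) finite set of points of ℤ². -/
def IsLatticePolygon (P : Set (Fin 2 → ℝ)) : Prop :=
  ∃ S : Finset (Fin 2 → ℤ), S.Nonempty ∧
    P = convexHull ℝ ((fun p : Fin 2 → ℤ => fun i => (p i : ℝ)) '' (S : Set (Fin 2 → ℤ)))

/-- The area of a plane set: its two-dimensional Lebesgue measure. -/
noncomputable def area (P : Set (Fin 2 → ℝ)) : ℝ :=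
  (volume P).toReal

lemma width_eq_of (P : Set (Fin 2 → ℝ)) (u : Fin 2 → ℝ) (x y : Fin 2 → ℝ)
    (hx : x ∈ P) (hy : y ∈ P)
    (hmax : ∀ p ∈ P, u 0 * p 0 + u 1 * p 1 ≤ u 0 * x 0 + u 1 * x 1)
    (hmin : ∀ p ∈ P, u 0 * y 0 + u 1 * y 1 ≤ u 0 * p 0 + u 1 * p 1) :
    width P u = (u 0 * x 0 + u 1 * x 1) - (u 0 * y 0 + u 1 * y 1) := by
  have hG : IsGreatest ((fun p => u 0 * p 0 + u 1 * p 1) '' P) (u 0 * x 0 + u 1 * x 1) :=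
    ⟨⟨x, hx, rfl⟩, by rintro z ⟨p, hp, rfl⟩; exact hmax p hp⟩
  have hL : IsLeast ((fun p => u 0 * p 0 + u 1 * p 1) '' P) (u 0 * y 0 + u 1 * y 1) :=
    ⟨⟨y, hy, rfl⟩, by rintro z ⟨p, hp, rfl⟩; exact hmin p hp⟩
  unfold width
  rw [hG.csSup_eq, hL.csInf_eq]

lemma exists_extremes (P : Set (Fin 2 → ℝ)) (hc : IsCompact P) (hne : P.Nonempty)
    (u : Fin 2 → ℝ) :
    ∃ x ∈ P, ∃ y ∈ P, (∀ p ∈ P, u 0 * p 0 + u 1 * p 1 ≤ u 0 * x 0 + u 1 * x 1) ∧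
      (∀ p ∈ P, u 0 * y 0 + u 1 * y 1 ≤ u 0 * p 0 + u 1 * p 1) := by
  have hcont : Continuous (fun p : Fin 2 → ℝ => u 0 * p 0 + u 1 * p 1) :=
    (continuous_const.mul (continuous_apply 0)).add (continuous_const.mul (continuous_apply 1))
  obtain ⟨x, hx, hmx⟩ := hc.exists_isMaxOn hne hcont.continuousOn
  obtain ⟨y, hy, hmy⟩ := hc.exists_isMinOn hne hcont.continuousOn
  exact ⟨x, hx, y, hy, fun p hp => hmx hp, fun p hp => hmy hp⟩

lemma width_nonneg' (P : Set (Fin 2 → ℝ)) (hc : IsCompact P) (hne : P.Nonempty)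
    (u : Fin 2 → ℝ) : 0 ≤ width P u := by
  obtain ⟨x, hx, y, hy, hmax, hmin⟩ := exists_extremes P hc hne u
  rw [width_eq_of P u x y hx hy hmax hmin]
  linarith [hmin x hx]

lemma width_hom (P : Set (Fin 2 → ℝ)) (hc : IsCompact P) (hne : P.Nonempty)
    (u v : Fin 2 → ℝ) (c : ℝ)
    (hg : ∀ p : Fin 2 → ℝ, u 0 * p 0 + u 1 * p 1 = c * (v 0 * p 0 + v 1 * p 1)) :
    width P u = |c| * width P v := by
  obtain ⟨x, hx, y, hy, hmax, hmin⟩ := exists_extremes P hc hne v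
  rcases le_or_gt 0 c with h0 | h0
  · rw [width_eq_of P u x y hx hy
      (fun p hp => by rw [hg, hg]; exact mul_le_mul_of_nonneg_left (hmax p hp) h0)
      (fun p hp => by rw [hg, hg]; exact mul_le_mul_of_nonneg_left (hmin p hp) h0),
      width_eq_of P v x y hx hy hmax hmin, hg x, hg y, abs_of_nonneg h0]
    ring
  · rw [width_eq_of P u y x hy hx
      (fun p hp => by rw [hg, hg]; exact mul_le_mul_of_nonpos_left (hmin p hp) h0.le)
      (fun p hp => by rw [hg, hg]; exact mul_le_mul_of_nonpos_left (hmax p hp) h0.le),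
      width_eq_of P v x y hx hy hmax hmin, hg x, hg y, abs_of_neg h0]
    ring

lemma width_subadd (P : Set (Fin 2 → ℝ)) (hc : IsCompact P) (hne : P.Nonempty)
    (u v w : Fin 2 → ℝ)
    (hg : ∀ p : Fin 2 → ℝ, u 0 * p 0 + u 1 * p 1 =
      (v 0 * p 0 + v 1 * p 1) + (w 0 * p 0 + w 1 * p 1)) :
    width P u ≤ width P v + width P w := by
  obtain ⟨x, hx, y, hy, hmaxu, hminu⟩ := exists_extremes P hc hne u
  obtain ⟨xv, hxv, yv, hyv, hmaxv, hminv⟩ := exists_extremes P hc hne v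
  obtain ⟨xw, hxw, yw, hyw, hmaxw, hminw⟩ := exists_extremes P hc hne w
  rw [width_eq_of P u x y hx hy hmaxu hminu, width_eq_of P v xv yv hxv hyv hmaxv hminv,
    width_eq_of P w xw yw hxw hyw hmaxw hminw]
  have e1 := hg x
  have e2 := hg y
  have h1 := hmaxv x hx
  have h2 := hminv y hy
  have h3 := hmaxw x hx
  have h4 := hminw y hy
  linarith

/-- If a plane convex body has width `h` in both coordinate directions, then its
lattice width is the minimum of `h`, `w_{(1,1)}(P)` and `w_{(1,-1)}(P)`. -/
theorem stmt1 (P : Set (Fin 2 → ℝ)) (h : ℝ) (hP : IsPlaneConvexBody P)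
    (h10 : width P ![1, 0] = h) (h01 : width P ![0, 1] = h) :
    latticeWidth P = min h (min (width P ![1, 1]) (width P ![1, -1])) := by
  obtain ⟨hPc, hPconv, hPint⟩ := hP
  have hne : P.Nonempty := hPint.mono interior_subset
  set m := min h (min (width P ![1, 1]) (width P ![1, -1])) with hm
  have h0 : 0 ≤ h := h10 ▸ width_nonneg' P hPc hne ![1, 0]
  -- lower bound for every primitive direction
  have key : ∀ u : Fin 2 → ℤ, Int.gcd (u 0) (u 1) = 1 →
      m ≤ width P (fun i => (u i : ℝ)) := by
    intro u hu
    rcases eq_or_ne (u 1) 0 with hb0 | hb0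
    · -- b = 0, so a = ±1
      have hga : (u 0).natAbs = 1 := by
        have := hu; rw [hb0] at this
        simpa [Int.gcd] using this
      have haa : u 0 = 1 ∨ u 0 = -1 := Int.natAbs_eq_iff.mp hga
      have hw : width P (fun i => (u i : ℝ)) = |((u 0 : ℤ) : ℝ)| * width P ![1, 0] := by
        apply width_hom P hPc hne _ _ ((u 0 : ℤ) : ℝ)
        intro p; rw [hb0]; push_cast; simp; try ring
      have habs : |((u 0 : ℤ) : ℝ)| = 1 := by rcases haa with h' | h' <;> rw [h'] <;> norm_num
      rw [hw, habs, one_mul, h10]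
      exact min_le_left _ _
    rcases eq_or_ne (u 0) 0 with ha0 | ha0
    · have hgb : (u 1).natAbs = 1 := by
        have := hu; rw [ha0] at this
        simpa [Int.gcd] using this
      have hbb : u 1 = 1 ∨ u 1 = -1 := Int.natAbs_eq_iff.mp hgb
      have hw : width P (fun i => (u i : ℝ)) = |((u 1 : ℤ) : ℝ)| * width P ![0, 1] := by
        apply width_hom P hPc hne _ _ ((u 1 : ℤ) : ℝ)
        intro p; rw [ha0]; push_cast; simp; try ring
      have habs : |((u 1 : ℤ) : ℝ)| = 1 := by rcases hbb with h' | h' <;> rw [h'] <;> norm_num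
      rw [hw, habs, one_mul, h01]
      exact min_le_left _ _
    rcases lt_trichotomy (u 0).natAbs (u 1).natAbs with hlt | heq | hgt
    · -- |b| > |a| ≥ 1 : width ≥ (|b| - |a|) h ≥ h
      have wa : width P ![(0 : ℝ), ((u 1 : ℤ) : ℝ)] = |((u 1 : ℤ) : ℝ)| * h := by
        rw [← h01]
        apply width_hom P hPc hne _ _ ((u 1 : ℤ) : ℝ)
        intro p; simp; try ring
      have wb : width P ![-((u 0 : ℤ) : ℝ), (0 : ℝ)] = |((u 0 : ℤ) : ℝ)| * h := by
        rw [← h10]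
        have := width_hom P hPc hne ![-((u 0 : ℤ) : ℝ), (0 : ℝ)] ![1, 0] (-((u 0 : ℤ) : ℝ))
          (by intro p; simp; try ring)
        rw [this, abs_neg]
      have hsub : width P ![(0 : ℝ), ((u 1 : ℤ) : ℝ)] ≤
          width P (fun i => (u i : ℝ)) + width P ![-((u 0 : ℤ) : ℝ), (0 : ℝ)] := by
        apply width_subadd P hPc hne
        intro p; push_cast; ring_nf; try ring
      have hcast : |((u 0 : ℤ) : ℝ)| + 1 ≤ |((u 1 : ℤ) : ℝ)| := by
        have h1 : ((u 0).natAbs : ℤ) + 1 ≤ ((u 1).natAbs : ℤ) := by exact_mod_cast hlt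
        have h2 : |((u 0 : ℤ) : ℝ)| = (((u 0).natAbs : ℤ) : ℝ) := by
          rw [← Int.cast_abs, Int.abs_eq_natAbs]
        have h3 : |((u 1 : ℤ) : ℝ)| = (((u 1).natAbs : ℤ) : ℝ) := by
          rw [← Int.cast_abs, Int.abs_eq_natAbs]
        rw [h2, h3]; exact_mod_cast h1
      have : h ≤ width P (fun i => (u i : ℝ)) := by nlinarith
      exact le_trans (min_le_left _ _) this
    · -- |a| = |b|, primitive forces a,b ∈ {±1}
      have hga : (u 0).natAbs = 1 := by
        have := hu
        rwa [Int.gcd, ← heq, Nat.gcd_self] at this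
      have hgb : (u 1).natAbs = 1 := by rw [← heq]; exact hga
      have haa : u 0 = 1 ∨ u 0 = -1 := Int.natAbs_eq_iff.mp hga
      have hbb : u 1 = 1 ∨ u 1 = -1 := Int.natAbs_eq_iff.mp hgb
      rcases haa with ha1 | ha1 <;> rcases hbb with hb1 | hb1
      · have hw : width P (fun i => (u i : ℝ)) = |(1 : ℝ)| * width P ![1, 1] := by
          apply width_hom P hPc hne _ _ 1
          intro p; rw [ha1, hb1]; push_cast; simp; try ring
        rw [hw]; simp
        exact le_trans (min_le_right _ _) (min_le_left _ _)
      · have hw : width P (fun i => (u i : ℝ)) = |(1 : ℝ)| * width P ![1, -1] := by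
          apply width_hom P hPc hne _ _ 1
          intro p; rw [ha1, hb1]; push_cast; simp; try ring
        rw [hw]; simp
        exact le_trans (min_le_right _ _) (min_le_right _ _)
      · have hw : width P (fun i => (u i : ℝ)) = |(-1 : ℝ)| * width P ![1, -1] := by
          apply width_hom P hPc hne _ _ (-1)
          intro p; rw [ha1, hb1]; push_cast; simp; try ring
        rw [hw]; simp
        exact le_trans (min_le_right _ _) (min_le_right _ _)
      · have hw : width P (fun i => (u i : ℝ)) = |(-1 : ℝ)| * width P ![1, 1] := by
          apply width_hom P hPc hne _ _ (-1)
          intro p; rw [ha1, hb1]; push_cast; simp; try ring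
        rw [hw]; simp
        exact le_trans (min_le_right _ _) (min_le_left _ _)
    · -- |a| > |b| ≥ 1
      have wa : width P ![((u 0 : ℤ) : ℝ), (0 : ℝ)] = |((u 0 : ℤ) : ℝ)| * h := by
        rw [← h10]
        apply width_hom P hPc hne _ _ ((u 0 : ℤ) : ℝ)
        intro p; simp; try ring
      have wb : width P ![(0 : ℝ), -((u 1 : ℤ) : ℝ)] = |((u 1 : ℤ) : ℝ)| * h := by
        rw [← h01]
        have := width_hom P hPc hne ![(0 : ℝ), -((u 1 : ℤ) : ℝ)] ![0, 1] (-((u 1 : ℤ) : ℝ))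
          (by intro p; simp; try ring)
        rw [this, abs_neg]
      have hsub : width P ![((u 0 : ℤ) : ℝ), (0 : ℝ)] ≤
          width P (fun i => (u i : ℝ)) + width P ![(0 : ℝ), -((u 1 : ℤ) : ℝ)] := by
        apply width_subadd P hPc hne
        intro p; push_cast; ring_nf; try ring
      have hcast : |((u 1 : ℤ) : ℝ)| + 1 ≤ |((u 0 : ℤ) : ℝ)| := by
        have h1 : ((u 1).natAbs : ℤ) + 1 ≤ ((u 0).natAbs : ℤ) := by exact_mod_cast hgt
        have h2 : |((u 0 : ℤ) : ℝ)| = (((u 0).natAbs : ℤ) : ℝ) := by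
          rw [← Int.cast_abs, Int.abs_eq_natAbs]
        have h3 : |((u 1 : ℤ) : ℝ)| = (((u 1).natAbs : ℤ) : ℝ) := by
          rw [← Int.cast_abs, Int.abs_eq_natAbs]
        rw [h2, h3]; exact_mod_cast h1
      have : h ≤ width P (fun i => (u i : ℝ)) := by nlinarith
      exact le_trans (min_le_left _ _) this
  -- membership of the three special widths
  have mem1 : h ∈ {w : ℝ | ∃ u : Fin 2 → ℤ, Int.gcd (u 0) (u 1) = 1 ∧
      w = width P (fun i => (u i : ℝ))} := by
    refine ⟨![1, 0], by decide, ?_⟩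
    have hw : width P (fun i => ((![1, 0] : Fin 2 → ℤ) i : ℝ)) =
        |(1 : ℝ)| * width P ![1, 0] := by
      apply width_hom P hPc hne _ _ 1
      intro p; simp
    rw [hw]; simp [h10]
  have mem2 : width P ![1, 1] ∈ {w : ℝ | ∃ u : Fin 2 → ℤ, Int.gcd (u 0) (u 1) = 1 ∧
      w = width P (fun i => (u i : ℝ))} := by
    refine ⟨![1, 1], by decide, ?_⟩
    have hw : width P (fun i => ((![1, 1] : Fin 2 → ℤ) i : ℝ)) =
        |(1 : ℝ)| * width P ![1, 1] := by
      apply width_hom P hPc hne _ _ 1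
      intro p; simp
    rw [hw]; simp
  have mem3 : width P ![1, -1] ∈ {w : ℝ | ∃ u : Fin 2 → ℤ, Int.gcd (u 0) (u 1) = 1 ∧
      w = width P (fun i => (u i : ℝ))} := by
    refine ⟨![1, -1], by decide, ?_⟩
    have hw : width P (fun i => ((![1, -1] : Fin 2 → ℤ) i : ℝ)) =
        |(1 : ℝ)| * width P ![1, -1] := by
      apply width_hom P hPc hne _ _ 1
      intro p; simp
    rw [hw]; simp
  have hbdd : BddBelow {w : ℝ | ∃ u : Fin 2 → ℤ, Int.gcd (u 0) (u 1) = 1 ∧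
      w = width P (fun i => (u i : ℝ))} := by
    refine ⟨m, ?_⟩
    rintro w ⟨u, hu, rfl⟩
    exact key u hu
  unfold latticeWidth
  apply le_antisymm
  · exact le_min (csInf_le hbdd mem1) (le_min (csInf_le hbdd mem2) (csInf_le hbdd mem3))
  · apply le_csInf ⟨h, mem1⟩
    rintro w ⟨u, hu, rfl⟩
    exact key u hu
end

section
/- Let h be a positive integer and let a, b be integers with 1 ≤ a ≤ h−1 and 1 ≤ b ≤ h−1. Then the lattice triangle T = conv{(0,0), (a,h), (h,b)} satisfies ls_□(T) = h. -/
open Set MeasureTheory Pointwise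

lemma key12 (h a b p q : ℤ) (ha1 : 1 ≤ a) (ha2 : a ≤ h - 1) (hb1 : 1 ≤ b) (hb2 : b ≤ h - 1)
    (h1 : |p * a + q * h| ≤ h - 1) (h2 : |p * h + q * b| ≤ h - 1) : q = -p := by
  have hh2 : 2 ≤ h := by omega
  rw [abs_le] at h1 h2
  obtain ⟨h1l, h1r⟩ := h1
  obtain ⟨h2l, h2r⟩ := h2
  rcases lt_trichotomy p 0 with hp | hp | hp
  · rcases lt_trichotomy q 0 with hq | hq | hq
    · exfalso
      nlinarith [mul_nonneg (by linarith : (0:ℤ) ≤ -p - 1) (by linarith : (0:ℤ) ≤ a),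
        mul_nonneg (by linarith : (0:ℤ) ≤ -q - 1) (by linarith : (0:ℤ) ≤ h)]
    · exfalso
      subst hq
      nlinarith [mul_nonneg (by linarith : (0:ℤ) ≤ -p - 1) (by linarith : (0:ℤ) ≤ h)]
    · have hle : p + q ≤ 0 := by
        by_contra hc
        push_neg at hc
        nlinarith [mul_nonneg (by linarith : (0:ℤ) ≤ p + q - 1) (by linarith : (0:ℤ) ≤ h),
          mul_nonneg (by linarith : (0:ℤ) ≤ -p - 1) (by linarith : (0:ℤ) ≤ h - a)]
      have hge : 0 ≤ p + q := by
        by_contra hc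
        push_neg at hc
        nlinarith [mul_nonneg (by linarith : (0:ℤ) ≤ -(p + q) - 1) (by linarith : (0:ℤ) ≤ h),
          mul_nonneg (by linarith : (0:ℤ) ≤ q - 1) (by linarith : (0:ℤ) ≤ h - b)]
      omega
  · subst hp
    rcases lt_trichotomy q 0 with hq | hq | hq
    · exfalso
      nlinarith [mul_nonneg (by linarith : (0:ℤ) ≤ -q - 1) (by linarith : (0:ℤ) ≤ h)]
    · omega
    · exfalso
      nlinarith [mul_nonneg (by linarith : (0:ℤ) ≤ q - 1) (by linarith : (0:ℤ) ≤ h)]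
  · rcases lt_trichotomy q 0 with hq | hq | hq
    · have hge : 0 ≤ p + q := by
        by_contra hc
        push_neg at hc
        nlinarith [mul_nonneg (by linarith : (0:ℤ) ≤ -(p + q) - 1) (by linarith : (0:ℤ) ≤ h),
          mul_nonneg (by linarith : (0:ℤ) ≤ p - 1) (by linarith : (0:ℤ) ≤ h - a)]
      have hle : p + q ≤ 0 := by
        by_contra hc
        push_neg at hc
        nlinarith [mul_nonneg (by linarith : (0:ℤ) ≤ p + q - 1) (by linarith : (0:ℤ) ≤ h),
          mul_nonneg (by linarith : (0:ℤ) ≤ -q - 1) (by linarith : (0:ℤ) ≤ h - b)]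
      omega
    · exfalso
      subst hq
      nlinarith [mul_nonneg (by linarith : (0:ℤ) ≤ p - 1) (by linarith : (0:ℤ) ≤ h)]
    · exfalso
      nlinarith [mul_nonneg (by linarith : (0:ℤ) ≤ p - 1) (by linarith : (0:ℤ) ≤ a),
        mul_nonneg (by linarith : (0:ℤ) ≤ q - 1) (by linarith : (0:ℤ) ≤ h)]

lemma mulVec_pair (A : Matrix (Fin 2) (Fin 2) ℤ) (x y : ℝ) (i : Fin 2) :
    ((A.map (Int.cast : ℤ → ℝ)).mulVec ![x, y]) i = (A i 0 : ℝ) * x + (A i 1 : ℝ) * y := by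
  simp [Matrix.mulVec, dotProduct, Fin.sum_univ_two]

lemma convex_squareDilate (l : ℝ) : Convex ℝ (squareDilate l) := by
  have : squareDilate l = Set.pi Set.univ (fun _ : Fin 2 => Set.Icc 0 l) := by
    ext x
    simp only [squareDilate, Set.mem_pi, Set.mem_setOf_eq, Set.mem_univ, true_implies]
  rw [this]
  exact convex_pi (fun i _ => convex_Icc 0 l)

/-- For integers `1 ≤ a, b ≤ h-1`, the lattice triangle
`T = conv{(0,0),(a,h),(h,b)}` satisfies `ls_□(T) = h`. -/
theorem stmt12 (h a b : ℤ) (hh : 0 < h)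
    (ha1 : 1 ≤ a) (ha2 : a ≤ h - 1) (hb1 : 1 ≤ b) (hb2 : b ≤ h - 1) :
    lsSquare (convexHull ℝ
      {(![0, 0] : Fin 2 → ℝ), ![(a : ℝ), (h : ℝ)], ![(h : ℝ), (b : ℝ)]}) = (h : ℝ) := by
  set T : Set (Fin 2 → ℝ) :=
    convexHull ℝ {(![0, 0] : Fin 2 → ℝ), ![(a : ℝ), (h : ℝ)], ![(h : ℝ), (b : ℝ)]} with hT
  set S : Set ℝ := {l : ℝ | 0 ≤ l ∧ ∃ φ, IsUnimodularMap φ ∧ φ '' T ⊆ squareDilate l} with hS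
  have h0h : (0 : ℝ) ≤ (h : ℝ) := by positivity
  have hmem : (h : ℝ) ∈ S := by
    refine ⟨h0h, fun x => x, ⟨1, 0, Or.inl (by simp), fun x => ?_⟩, ?_⟩
    · rw [Matrix.map_one _ Int.cast_zero Int.cast_one, Matrix.one_mulVec]
      funext j
      simp
    · rw [Set.image_id']
      apply convexHull_min ?_ (convex_squareDilate _)
      intro x hx
      simp only [Set.mem_insert_iff, Set.mem_singleton_iff] at hx
      rcases hx with rfl | rfl | rfl <;> intro i <;> fin_cases i <;>
        simp only [Fin.zero_eta, Fin.mk_one, Matrix.cons_val_zero, Matrix.cons_val_one,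
          Matrix.head_cons, Set.mem_Icc] <;>
        constructor <;> first
          | exact le_refl _
          | exact h0h
          | exact_mod_cast (by omega : (0:ℤ) ≤ a)
          | exact_mod_cast (by omega : a ≤ h)
          | exact_mod_cast (by omega : (0:ℤ) ≤ b)
          | exact_mod_cast (by omega : b ≤ h)
  have hlb : ∀ l ∈ S, (h : ℝ) ≤ l := by
    rintro l ⟨hl0, φ, ⟨A, t, hdet, hφ⟩, hsub⟩
    by_contra hc
    push_neg at hc
    have hv0 : (![0, 0] : Fin 2 → ℝ) ∈ T := subset_convexHull ℝ _ (by simp)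
    have hv1 : (![(a : ℝ), (h : ℝ)]) ∈ T := subset_convexHull ℝ _ (by simp)
    have hv2 : (![(h : ℝ), (b : ℝ)]) ∈ T := subset_convexHull ℝ _ (by simp)
    have key : ∀ i : Fin 2, A i 1 = -(A i 0) := by
      intro i
      have m0 := hsub ⟨_, hv0, rfl⟩ i
      have m1 := hsub ⟨_, hv1, rfl⟩ i
      have m2 := hsub ⟨_, hv2, rfl⟩ i
      rw [hφ, Pi.add_apply, mulVec_pair] at m0 m1 m2
      rw [Set.mem_Icc] at m0 m1 m2
      have e1 : |((A i 0 * a + A i 1 * h : ℤ) : ℝ)| ≤ l := by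
        rw [abs_le]
        push_cast
        constructor <;> nlinarith [m0.1, m0.2, m1.1, m1.2]
      have e2 : |((A i 0 * h + A i 1 * b : ℤ) : ℝ)| ≤ l := by
        rw [abs_le]
        push_cast
        constructor <;> nlinarith [m0.1, m0.2, m2.1, m2.2]
      have f1 : |A i 0 * a + A i 1 * h| ≤ h - 1 := by
        have hf : |A i 0 * a + A i 1 * h| < h := by exact_mod_cast lt_of_le_of_lt e1 hc
        omega
      have f2 : |A i 0 * h + A i 1 * b| ≤ h - 1 := by
        have hf : |A i 0 * h + A i 1 * b| < h := by exact_mod_cast lt_of_le_of_lt e2 hc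
        omega
      exact key12 h a b (A i 0) (A i 1) ha1 ha2 hb1 hb2 f1 f2
    have hdet0 : A.det = 0 := by
      rw [Matrix.det_fin_two, key 0, key 1]
      ring
    rcases hdet with hd | hd <;> omega
  exact le_antisymm (csInf_le ⟨0, fun x hx => hx.1⟩ hmem) (le_csInf ⟨_, hmem⟩ hlb)
end

section
/- Let h be a positive integer and let a, b, c, d be integers with 1 ≤ a, b, c, d ≤ h−1. Then the lattice quadrilateral Q = conv{(a,0), (0,b), (h,h−c), (h−d,h)} satisfies ls_□(Q) = h. -/
open Set MeasureTheory Pointwise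

/-! ### Auxiliary lemmas -/

lemma stmt14_core (h X Y p q : ℤ) (hh : 2 ≤ h) (hp : 1 ≤ p) (hq : 1 ≤ q)
    (hX : X ≤ h - 2) (hY : Y ≤ h - 2)
    (h1 : (p-1)*h + 1 ≤ q*X) (h2 : (q-1)*h + 1 ≤ p*Y) : p = q := by
  rcases lt_trichotomy p q with hlt | he | hgt
  · exfalso
    nlinarith [mul_le_mul_of_nonneg_left hY (by linarith : (0:ℤ) ≤ p),
      mul_nonneg (by linarith : (0:ℤ) ≤ q - 1 - p) (by linarith : (0:ℤ) ≤ h - 2)]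
  · exact he
  · exfalso
    nlinarith [mul_le_mul_of_nonneg_left hX (by linarith : (0:ℤ) ≤ q),
      mul_nonneg (by linarith : (0:ℤ) ≤ p - 1 - q) (by linarith : (0:ℤ) ≤ h - 2)]

lemma stmt14_caseA (h a b c d p q : ℤ) (hh : 2 ≤ h)
    (ha2 : a ≤ h - 1) (hb2 : b ≤ h - 1) (hc2 : c ≤ h - 1) (hd2 : d ≤ h - 1)
    (hp : 1 ≤ p) (hq : 1 ≤ q)
    (h32 : p*h + q*(h-c) - q*b ≤ h - 1)
    (h41 : p*(h-d) + q*h - p*a ≤ h - 1) :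
    p = q ∧ h + 1 ≤ b + c := by
  have hX : (p-1)*h + 1 ≤ q*(b+c-h) := by linarith
  have hY : (q-1)*h + 1 ≤ p*(a+d-h) := by linarith
  have hpq := stmt14_core h (b+c-h) (a+d-h) p q hh hp hq (by linarith) (by linarith) hX hY
  refine ⟨hpq, ?_⟩
  by_contra hbc
  push_neg at hbc
  nlinarith [mul_nonpos_of_nonneg_of_nonpos (by linarith : (0:ℤ) ≤ q) (by linarith : b+c-h ≤ 0),
    mul_nonneg (by linarith : (0:ℤ) ≤ p - 1) (by linarith : (0:ℤ) ≤ h)]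

lemma stmt14_caseB (h a b c d p q : ℤ) (hh : 2 ≤ h)
    (ha1 : 1 ≤ a) (hb1 : 1 ≤ b) (hc1 : 1 ≤ c) (hd1 : 1 ≤ d)
    (hp : 1 ≤ p) (hq : q ≤ -1)
    (h32 : p*h + q*(h-c) - q*b ≤ h - 1)
    (h14 : p*a - (p*(h-d) + q*h) ≤ h - 1) :
    q = -p ∧ b + c ≤ h - 1 := by
  have hX : (p-1)*h + 1 ≤ (-q)*(h-b-c) := by linarith
  have hY : ((-q)-1)*h + 1 ≤ p*(h-a-d) := by linarith
  have hpq := stmt14_core h (h-b-c) (h-a-d) p (-q) hh hp (by linarith) (by linarith)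
    (by linarith) hX hY
  constructor
  · linarith
  · by_contra hbc
    push_neg at hbc
    nlinarith [mul_nonpos_of_nonneg_of_nonpos (by linarith : (0:ℤ) ≤ -q)
        (by linarith : h-b-c ≤ 0),
      mul_nonneg (by linarith : (0:ℤ) ≤ p - 1) (by linarith : (0:ℤ) ≤ h)]

lemma stmt14_dir (h a b c d p q : ℤ) (hh : 2 ≤ h)
    (ha1 : 1 ≤ a) (ha2 : a ≤ h-1) (hb1 : 1 ≤ b) (hb2 : b ≤ h-1)
    (hc1 : 1 ≤ c) (hc2 : c ≤ h-1) (hd1 : 1 ≤ d) (hd2 : d ≤ h-1)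
    (hpq : p ≠ 0 ∨ q ≠ 0)
    (h32 : p*h + q*(h-c) - q*b ≤ h - 1)
    (h23 : q*b - (p*h + q*(h-c)) ≤ h - 1)
    (h41 : p*(h-d) + q*h - p*a ≤ h - 1)
    (h14 : p*a - (p*(h-d) + q*h) ≤ h - 1) :
    (q = p ∧ h + 1 ≤ b + c) ∨ (q = -p ∧ b + c ≤ h - 1) := by
  rcases lt_trichotomy p 0 with hp | hp | hp
  · rcases lt_trichotomy q 0 with hq | hq | hq
    · left
      have := stmt14_caseA h a b c d (-p) (-q) hh ha2 hb2 hc2 hd2 (by linarith) (by linarith)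
        (by linarith) (by linarith)
      exact ⟨by linarith [this.1], this.2⟩
    · exfalso
      subst hq
      nlinarith [mul_nonneg (by linarith : (0:ℤ) ≤ -p - 1) (by linarith : (0:ℤ) ≤ h)]
    · right
      have := stmt14_caseB h a b c d (-p) (-q) hh ha1 hb1 hc1 hd1 (by linarith) (by linarith)
        (by linarith) (by linarith)
      exact ⟨by linarith [this.1], this.2⟩
  · subst hp
    rcases lt_trichotomy q 0 with hq | hq | hq
    · exfalso
      nlinarith [mul_nonneg (by linarith : (0:ℤ) ≤ -q - 1) (by linarith : (0:ℤ) ≤ h)]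
    · exact absurd hpq (by simp [hq])
    · exfalso
      nlinarith [mul_nonneg (by linarith : (0:ℤ) ≤ q - 1) (by linarith : (0:ℤ) ≤ h)]
  · rcases lt_trichotomy q 0 with hq | hq | hq
    · right
      exact stmt14_caseB h a b c d p q hh ha1 hb1 hc1 hd1 (by linarith) (by linarith) h32 h14
    · exfalso
      subst hq
      nlinarith [mul_nonneg (by linarith : (0:ℤ) ≤ p - 1) (by linarith : (0:ℤ) ≤ h)]
    · left
      have := stmt14_caseA h a b c d p q hh ha2 hb2 hc2 hd2 (by linarith) (by linarith) h32 h41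
      exact ⟨this.1.symm, this.2⟩

lemma stmt14_keyFalse (h a b c d p q r s t0 t1 : ℤ) (hh : 2 ≤ h)
    (ha1 : 1 ≤ a) (ha2 : a ≤ h-1) (hb1 : 1 ≤ b) (hb2 : b ≤ h-1)
    (hc1 : 1 ≤ c) (hc2 : c ≤ h-1) (hd1 : 1 ≤ d) (hd2 : d ≤ h-1)
    (hdet : p*s - q*r = 1 ∨ p*s - q*r = -1)
    (hu1 : 0 ≤ p*a + q*0 + t0) (hu1' : p*a + q*0 + t0 ≤ h-1)
    (hu2 : 0 ≤ p*0 + q*b + t0) (hu2' : p*0 + q*b + t0 ≤ h-1)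
    (hu3 : 0 ≤ p*h + q*(h-c) + t0) (hu3' : p*h + q*(h-c) + t0 ≤ h-1)
    (hu4 : 0 ≤ p*(h-d) + q*h + t0) (hu4' : p*(h-d) + q*h + t0 ≤ h-1)
    (hv1 : 0 ≤ r*a + s*0 + t1) (hv1' : r*a + s*0 + t1 ≤ h-1)
    (hv2 : 0 ≤ r*0 + s*b + t1) (hv2' : r*0 + s*b + t1 ≤ h-1)
    (hv3 : 0 ≤ r*h + s*(h-c) + t1) (hv3' : r*h + s*(h-c) + t1 ≤ h-1)
    (hv4 : 0 ≤ r*(h-d) + s*h + t1) (hv4' : r*(h-d) + s*h + t1 ≤ h-1) : False := by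
  have hpq : p ≠ 0 ∨ q ≠ 0 := by
    by_contra hcon
    push_neg at hcon
    obtain ⟨e1, e2⟩ := hcon
    rw [e1, e2] at hdet
    simp at hdet
  have hrs : r ≠ 0 ∨ s ≠ 0 := by
    by_contra hcon
    push_neg at hcon
    obtain ⟨e1, e2⟩ := hcon
    rw [e1, e2] at hdet
    simp at hdet
  have Du := stmt14_dir h a b c d p q hh ha1 ha2 hb1 hb2 hc1 hc2 hd1 hd2 hpq
    (by linarith) (by linarith) (by linarith) (by linarith)
  have Dv := stmt14_dir h a b c d r s hh ha1 ha2 hb1 hb2 hc1 hc2 hd1 hd2 hrs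
    (by linarith) (by linarith) (by linarith) (by linarith)
  rcases Du with ⟨e1, f1⟩ | ⟨e1, f1⟩ <;> rcases Dv with ⟨e2, f2⟩ | ⟨e2, f2⟩
  · have hz : p*s - q*r = 0 := by rw [e1, e2]; ring
    rcases hdet with hd | hd <;> omega
  · linarith
  · linarith
  · have hz : p*s - q*r = 0 := by rw [e1, e2]; ring
    rcases hdet with hd | hd <;> omega

lemma stmt14_vertex_bound (A : Matrix (Fin 2) (Fin 2) ℤ) (t : Fin 2 → ℤ)
    (φ : (Fin 2 → ℝ) → (Fin 2 → ℝ))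
    (hφ : ∀ x, φ x = (A.map (Int.cast : ℤ → ℝ)).mulVec x + fun i => (t i : ℝ))
    (l : ℝ) (h x y : ℤ) (hlt : l < h) (Q : Set (Fin 2 → ℝ))
    (hsub : φ '' Q ⊆ squareDilate l)
    (hV : ![(x:ℝ), (y:ℝ)] ∈ Q) (j : Fin 2) :
    0 ≤ A j 0 * x + A j 1 * y + t j ∧ A j 0 * x + A j 1 * y + t j ≤ h - 1 := by
  have h1 : φ ![(x:ℝ), (y:ℝ)] ∈ squareDilate l := hsub (Set.mem_image_of_mem φ hV)
  simp only [squareDilate, Set.mem_setOf_eq] at h1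
  have h2 := h1 j
  rw [hφ] at h2
  simp only [Pi.add_apply, Matrix.mulVec, dotProduct, Fin.sum_univ_two,
    Matrix.map_apply, Matrix.cons_val_zero, Matrix.cons_val_one, Matrix.head_cons,
    Set.mem_Icc] at h2
  obtain ⟨hlo, hhi⟩ := h2
  have hcast : ((A j 0 * x + A j 1 * y + t j : ℤ) : ℝ)
      = (A j 0 : ℝ) * (x:ℝ) + (A j 1 : ℝ) * (y:ℝ) + (t j : ℝ) := by push_cast; ring
  constructor
  · exact_mod_cast hcast ▸ hlo
  · have h3 : ((A j 0 * x + A j 1 * y + t j : ℤ) : ℝ) < ((h : ℤ) : ℝ) := by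
      rw [hcast]; linarith
    have h4 : A j 0 * x + A j 1 * y + t j < h := by exact_mod_cast h3
    linarith [Int.lt_iff_add_one_le.mp h4]

lemma stmt14_pt_mem (x y l : ℝ) (hx0 : 0 ≤ x) (hx1 : x ≤ l) (hy0 : 0 ≤ y) (hy1 : y ≤ l) :
    ![x, y] ∈ squareDilate l := by
  intro i
  fin_cases i <;> simp_all

/-- For integers `1 ≤ a, b, c, d ≤ h-1`, the lattice quadrilateral
`Q = conv{(a,0),(0,b),(h,h-c),(h-d,h)}` satisfies `ls_□(Q) = h`. -/
theorem stmt14 (h a b c d : ℤ) (hh : 0 < h)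
    (ha1 : 1 ≤ a) (ha2 : a ≤ h - 1) (hb1 : 1 ≤ b) (hb2 : b ≤ h - 1)
    (hc1 : 1 ≤ c) (hc2 : c ≤ h - 1) (hd1 : 1 ≤ d) (hd2 : d ≤ h - 1) :
    lsSquare (convexHull ℝ
      {(![(a : ℝ), 0] : Fin 2 → ℝ), ![0, (b : ℝ)],
        ![(h : ℝ), ((h - c : ℤ) : ℝ)], ![((h - d : ℤ) : ℝ), (h : ℝ)]}) = (h : ℝ) := by
  have hh2 : (2:ℤ) ≤ h := by omega
  set V1 : Fin 2 → ℝ := ![(a : ℝ), 0] with hV1def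
  set V2 : Fin 2 → ℝ := ![0, (b : ℝ)] with hV2def
  set V3 : Fin 2 → ℝ := ![(h : ℝ), ((h - c : ℤ) : ℝ)] with hV3def
  set V4 : Fin 2 → ℝ := ![((h - d : ℤ) : ℝ), (h : ℝ)] with hV4def
  set Q : Set (Fin 2 → ℝ) := convexHull ℝ {V1, V2, V3, V4} with hQdef
  have hm1 : V1 ∈ Q := subset_convexHull ℝ _ (by simp)
  have hm2 : V2 ∈ Q := subset_convexHull ℝ _ (by simp)
  have hm3 : V3 ∈ Q := subset_convexHull ℝ _ (by simp)
  have hm4 : V4 ∈ Q := subset_convexHull ℝ _ (by simp)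
  have haR : (1:ℝ) ≤ (a:ℝ) ∧ (a:ℝ) ≤ (h:ℝ) - 1 := by constructor <;> exact_mod_cast ‹_›
  have hbR : (1:ℝ) ≤ (b:ℝ) ∧ (b:ℝ) ≤ (h:ℝ) - 1 := by constructor <;> exact_mod_cast ‹_›
  have hcR : (1:ℝ) ≤ (c:ℝ) ∧ (c:ℝ) ≤ (h:ℝ) - 1 := by constructor <;> exact_mod_cast ‹_›
  have hdR : (1:ℝ) ≤ (d:ℝ) ∧ (d:ℝ) ≤ (h:ℝ) - 1 := by constructor <;> exact_mod_cast ‹_›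
  have hhR : (2:ℝ) ≤ (h:ℝ) := by exact_mod_cast hh2
  have hsqconv : ∀ l : ℝ, Convex ℝ (squareDilate l) := by
    intro l
    have e : squareDilate l = Set.pi Set.univ (fun _ : Fin 2 => Set.Icc (0:ℝ) l) := by
      ext x
      simp [squareDilate, Set.mem_pi, Pi.le_def, forall_and]
    rw [e]
    exact convex_pi fun i _ => convex_Icc 0 l
  have hmem : (h:ℝ) ∈ {l : ℝ | 0 ≤ l ∧ ∃ φ, IsUnimodularMap φ ∧ φ '' Q ⊆ squareDilate l} := by
    refine ⟨by positivity, id, ⟨1, 0, Or.inl Matrix.det_one, ?_⟩, ?_⟩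
    · intro x
      funext i
      simp [Matrix.map_one, Matrix.one_mulVec]
    · rw [Set.image_id]
      refine convexHull_min ?_ (hsqconv _)
      intro x hx
      have hcd : ((h - c : ℤ) : ℝ) = (h:ℝ) - (c:ℝ) := by push_cast; ring
      have hdd : ((h - d : ℤ) : ℝ) = (h:ℝ) - (d:ℝ) := by push_cast; ring
      simp only [Set.mem_insert_iff, Set.mem_singleton_iff] at hx
      rcases hx with hx | hx | hx | hx <;> subst hx
      · exact stmt14_pt_mem _ _ _ (by linarith [haR.1]) (by linarith [haR.2])
          le_rfl (by linarith)
      · exact stmt14_pt_mem _ _ _ le_rfl (by linarith) (by linarith [hbR.1])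
          (by linarith [hbR.2])
      · exact stmt14_pt_mem _ _ _ (by linarith) le_rfl
          (by rw [hcd]; linarith [hcR.2]) (by rw [hcd]; linarith [hcR.1])
      · exact stmt14_pt_mem _ _ _ (by rw [hdd]; linarith [hdR.2])
          (by rw [hdd]; linarith [hdR.1]) (by linarith) le_rfl
  refine le_antisymm (csInf_le ⟨0, fun x hx => hx.1⟩ hmem) (le_csInf ⟨_, hmem⟩ ?_)
  rintro l ⟨hl0, φ, ⟨A, t, hdet, hφ⟩, hsub⟩
  by_contra hlt
  push_neg at hlt
  rw [Matrix.det_fin_two] at hdet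
  have hm1' : ![((a:ℤ):ℝ), ((0:ℤ):ℝ)] ∈ Q := by
    have e : (![((a:ℤ):ℝ), ((0:ℤ):ℝ)] : Fin 2 → ℝ) = V1 := by
      rw [hV1def]; funext i; fin_cases i <;> simp
    rw [e]; exact hm1
  have hm2' : ![((0:ℤ):ℝ), ((b:ℤ):ℝ)] ∈ Q := by
    have e : (![((0:ℤ):ℝ), ((b:ℤ):ℝ)] : Fin 2 → ℝ) = V2 := by
      rw [hV2def]; funext i; fin_cases i <;> simp
    rw [e]; exact hm2
  have hm3' : ![((h:ℤ):ℝ), ((h-c:ℤ):ℝ)] ∈ Q := hm3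
  have hm4' : ![((h-d:ℤ):ℝ), ((h:ℤ):ℝ)] ∈ Q := hm4
  have B1 := stmt14_vertex_bound A t φ hφ l h a 0 hlt Q hsub hm1'
  have B2 := stmt14_vertex_bound A t φ hφ l h 0 b hlt Q hsub hm2'
  have B3 := stmt14_vertex_bound A t φ hφ l h h (h-c) hlt Q hsub hm3'
  have B4 := stmt14_vertex_bound A t φ hφ l h (h-d) h hlt Q hsub hm4'
  exact stmt14_keyFalse h a b c d (A 0 0) (A 0 1) (A 1 0) (A 1 1) (t 0) (t 1) hh2
    ha1 ha2 hb1 hb2 hc1 hc2 hd1 hd2 hdet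
    (by linarith [(B1 0).1]) (by linarith [(B1 0).2])
    (by linarith [(B2 0).1]) (by linarith [(B2 0).2])
    (by linarith [(B3 0).1]) (by linarith [(B3 0).2])
    (by linarith [(B4 0).1]) (by linarith [(B4 0).2])
    (by linarith [(B1 1).1]) (by linarith [(B1 1).2])
    (by linarith [(B2 1).1]) (by linarith [(B2 1).2])
    (by linarith [(B3 1).1]) (by linarith [(B3 1).2])
    (by linarith [(B4 1).1]) (by linarith [(B4 1).2])
end

section
/- Let h be a positive integer and let a, b, c, d be integers with 1 ≤ a, b, c, d ≤ h−1. Then the two conditions min{a,b} + min{c,d} > h and max{a,c} + max{b,d} < h cannot hold simultaneously. Moreover, if Q = conv{(a,0), (0,b), (h,h−c), (h−d,h)} satisfies max{a,c} + max{b,d} < h, then Q is lattice-equivalent to a quadrilateral conv{(a′,0), (0,b′), (h,h−c′), (h−d′,h)} with integers a′, b′, c′, d′ ∈ [1, h−1] satisfying min{a′,b′} + min{c′,d′} > h. -/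
open Set MeasureTheory Pointwise

theorem min_add_min_le_max_add_max {α : Type*} [LinearOrder α] [Add α] [AddLeftMono α]
    [AddRightMono α] (a b c d : α) : min a b + min c d ≤ max a c + max b d :=
  add_le_add ((min_le_left a b).trans (le_max_left a c))
    ((min_le_right c d).trans (le_max_right b d))

theorem IsUnimodularMap.image_convexHull {φ : (Fin 2 → ℝ) → (Fin 2 → ℝ)}
    (hφ : IsUnimodularMap φ) (s : Set (Fin 2 → ℝ)) :
    φ '' convexHull ℝ s = convexHull ℝ (φ '' s) := by
  obtain ⟨A, t, -, hφ⟩ := hφ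
  let f : (Fin 2 → ℝ) →ᵃ[ℝ] (Fin 2 → ℝ) :=
    ⟨φ, (A.map (Int.cast : ℤ → ℝ)).mulVecLin, fun p v => by
      simp only [hφ, vadd_eq_add, Matrix.mulVecLin_apply, Matrix.mulVec_add]
      abel⟩
  exact f.image_convexHull s

def inscribedQuad (h a b c d : ℤ) : Set (Fin 2 → ℝ) :=
  convexHull ℝ
    {(![(a : ℝ), 0] : Fin 2 → ℝ), ![0, (b : ℝ)],
      ![(h : ℝ), ((h - c : ℤ) : ℝ)], ![((h - d : ℤ) : ℝ), (h : ℝ)]}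

theorem isUnimodularMap_reflect (h : ℤ) :
    IsUnimodularMap (fun x => ![x 0, h - x 1]) := by
  refine ⟨!![1, 0; 0, -1], ![0, h], Or.inr (by simp [Matrix.det_fin_two_of]), fun x => ?_⟩
  ext i
  fin_cases i <;> simp [sub_eq_neg_add]

/-- The reflection `(x, y) ↦ (x, h - y)` of `[0,h]²` swaps the bottom and top sides, turning
the bounds on `max` into bounds on `min`. -/
theorem latticeEquivalent_inscribedQuad_reflect (h a b c d : ℤ) :
    LatticeEquivalent (inscribedQuad h a b c d)
      (inscribedQuad h (h - d) (h - b) (h - c) (h - a)) := by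
  refine ⟨_, isUnimodularMap_reflect h, ?_⟩
  rw [inscribedQuad, inscribedQuad, (isUnimodularMap_reflect h).image_convexHull]
  congr 1
  simp only [Set.image_insert_eq, Set.image_singleton, Matrix.cons_val_zero,
    Matrix.cons_val_one, Int.cast_sub, sub_sub_cancel, sub_zero, sub_self]
  ext x
  simp only [Set.mem_insert_iff, Set.mem_singleton_iff]
  tauto

theorem stmt16_general (h a b c d : ℤ)
    (ha1 : 1 ≤ a) (ha2 : a ≤ h - 1) (hb1 : 1 ≤ b) (hb2 : b ≤ h - 1)
    (hc1 : 1 ≤ c) (hc2 : c ≤ h - 1) (hd1 : 1 ≤ d) (hd2 : d ≤ h - 1) :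
    ¬(h < min a b + min c d ∧ max a c + max b d < h) ∧
    (max a c + max b d < h →
      ∃ a' b' c' d' : ℤ, 1 ≤ a' ∧ a' ≤ h - 1 ∧ 1 ≤ b' ∧ b' ≤ h - 1 ∧
        1 ≤ c' ∧ c' ≤ h - 1 ∧ 1 ≤ d' ∧ d' ≤ h - 1 ∧
        h < min a' b' + min c' d' ∧
        LatticeEquivalent
          (convexHull ℝ
            {(![(a : ℝ), 0] : Fin 2 → ℝ), ![0, (b : ℝ)],
              ![(h : ℝ), ((h - c : ℤ) : ℝ)], ![((h - d : ℤ) : ℝ), (h : ℝ)]})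
          (convexHull ℝ
            {(![(a' : ℝ), 0] : Fin 2 → ℝ), ![0, (b' : ℝ)],
              ![(h : ℝ), ((h - c' : ℤ) : ℝ)], ![((h - d' : ℤ) : ℝ), (h : ℝ)]})) := by
  refine ⟨fun ⟨hmin, hmax⟩ => (min_add_min_le_max_add_max a b c d).not_gt (hmax.trans hmin),
    fun hmax => ?_⟩
  exact ⟨h - d, h - b, h - c, h - a, by omega, by omega, by omega, by omega, by omega, by omega,
    by omega, by omega, by omega, latticeEquivalent_inscribedQuad_reflect h a b c d⟩

/-- For integers `1 ≤ a, b, c, d ≤ h-1`, the conditions `min{a,b}+min{c,d} > h` and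
`max{a,c}+max{b,d} < h` cannot hold simultaneously; moreover if the quadrilateral
`Q = conv{(a,0),(0,b),(h,h-c),(h-d,h)}` satisfies the second condition then it is
lattice-equivalent to a quadrilateral of the same shape satisfying the first. -/
theorem stmt16 (h a b c d : ℤ) (hh : 0 < h)
    (ha1 : 1 ≤ a) (ha2 : a ≤ h - 1) (hb1 : 1 ≤ b) (hb2 : b ≤ h - 1)
    (hc1 : 1 ≤ c) (hc2 : c ≤ h - 1) (hd1 : 1 ≤ d) (hd2 : d ≤ h - 1) :
    ¬(h < min a b + min c d ∧ max a c + max b d < h) ∧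
    (max a c + max b d < h →
      ∃ a' b' c' d' : ℤ, 1 ≤ a' ∧ a' ≤ h - 1 ∧ 1 ≤ b' ∧ b' ≤ h - 1 ∧
        1 ≤ c' ∧ c' ≤ h - 1 ∧ 1 ≤ d' ∧ d' ≤ h - 1 ∧
        h < min a' b' + min c' d' ∧
        LatticeEquivalent
          (convexHull ℝ
            {(![(a : ℝ), 0] : Fin 2 → ℝ), ![0, (b : ℝ)],
              ![(h : ℝ), ((h - c : ℤ) : ℝ)], ![((h - d : ℤ) : ℝ), (h : ℝ)]})
          (convexHull ℝ
            {(![(a' : ℝ), 0] : Fin 2 → ℝ), ![0, (b' : ℝ)],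
              ![(h : ℝ), ((h - c' : ℤ) : ℝ)], ![((h - d' : ℤ) : ℝ), (h : ℝ)]})) :=
  stmt16_general h a b c d ha1 ha2 hb1 hb2 hc1 hc2 hd1 hd2
end
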